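/- arXiv:2403.02934 — 2 statements merged into one kernel-verified Lean document; each statement's English description precedes it below -/
import Mathlib

section
/- In a connected graph with non-negative edge weights and κ ≥ 2 terminals, for any partial tree T containing a nonempty proper subset of the terminals, the distance from T to the nearest terminal outside T is at most the cost of any Steiner tree spanning all terminals. -/
/-- The total weight of a walk: sum of the weights of its edges. -/
noncomputable def walkWeight {V : Type*} {G : SimpleGraph V}
    (we : Sym2 V → NNReal) {u v : V} (p : G.Walk u v) : NNReal :=
  (p.edges.map we).sum

/-- Weighted shortest-path distance. -/
noncomputable def wdist {V : Type*} (G : SimpleGraph V) (we : Sym2 V → NNReal)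
    (u v : V) : NNReal :=
  sInf {x | ∃ p : G.Walk u v, x = walkWeight we p}

/-- Distance from a set of vertices to a vertex. -/
noncomputable def setDist {V : Type*} (G : SimpleGraph V) (we : Sym2 V → NNReal)
    (A : Set V) (v : V) : NNReal :=
  sInf {x | ∃ u ∈ A, x = wdist G we u v}

/-- Total edge cost of a subgraph. -/
noncomputable def subgraphCost {V : Type*} {G : SimpleGraph V}
    (we : Sym2 V → NNReal) (H : G.Subgraph) : NNReal :=
  ∑ᶠ e ∈ H.edgeSet, we e

lemma wdist_le_walkWeight {V : Type*} {G : SimpleGraph V} (we : Sym2 V → NNReal)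
    {u v : V} (p : G.Walk u v) : wdist G we u v ≤ walkWeight we p :=
  csInf_le (OrderBot.bddBelow _) ⟨p, rfl⟩

lemma setDist_le_wdist {V : Type*} {G : SimpleGraph V} (we : Sym2 V → NNReal)
    {A : Set V} {u : V} (v : V) (hu : u ∈ A) :
    setDist G we A v ≤ wdist G we u v :=
  csInf_le (OrderBot.bddBelow _) ⟨u, hu, rfl⟩

/-- In a connected graph with non-negative edge weights and at least two
terminals, for any partial tree `T` containing a nonempty proper subset of the
terminals, the distance from `T` to the nearest terminal outside `T` is at most
the cost of any Steiner tree spanning all the terminals. -/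
theorem nearest_terminal_le_steiner {V : Type*} [Fintype V] (G : SimpleGraph V)
    (we : Sym2 V → NNReal) (hG : G.Connected)
    (terminals : Finset V) (hcard : 2 ≤ terminals.card)
    (T : G.Subgraph) (hTtree : T.coe.IsTree)
    (hsome : ∃ x ∈ terminals, x ∈ T.verts)
    (hout : ∃ x ∈ terminals, x ∉ T.verts)
    (St : G.Subgraph) (hStTerm : (terminals : Set V) ⊆ St.verts)
    (hSttree : St.coe.IsTree) :
    ∃ v ∈ terminals, v ∉ T.verts ∧
      (∀ y ∈ terminals, y ∉ T.verts → setDist G we T.verts v ≤ setDist G we T.verts y) ∧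
      setDist G we T.verts v ≤ subgraphCost we St := by
  classical
  obtain ⟨a, haT, haV⟩ := hsome
  obtain ⟨b, hbT, hbV⟩ := hout
  set S := terminals.filter (fun x => x ∉ T.verts) with hS
  have hbS : b ∈ S := by simp [hS, hbT, hbV]
  obtain ⟨v, hvS, hvmin⟩ := S.exists_min_image (setDist G we T.verts) ⟨b, hbS⟩
  have hvT : v ∈ terminals := (Finset.mem_filter.mp hvS).1
  have hvnot : v ∉ T.verts := by
    have := (Finset.mem_filter.mp hvS).2
    simpa using this
  refine ⟨v, hvT, hvnot, ?_, ?_⟩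
  · intro y hy hyn
    exact hvmin y (Finset.mem_filter.mpr ⟨hy, hyn⟩)
  · have h1 : setDist G we T.verts v ≤ setDist G we T.verts b := hvmin b hbS
    refine h1.trans ?_
    have haSt : a ∈ St.verts := hStTerm haT
    have hbSt : b ∈ St.verts := hStTerm hbT
    obtain ⟨p⟩ := hSttree.isConnected ⟨a, haSt⟩ ⟨b, hbSt⟩
    set q := p.toPath with hq
    have hnd : q.1.edges.Nodup := q.2.edges_nodup
    -- the walk mapped into G
    have key : walkWeight we (q.1.map St.hom) ≤ subgraphCost we St := by
      have hfin : St.edgeSet.Finite := St.edgeSet.toFinite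
      have hcost : subgraphCost we St = ∑ e ∈ hfin.toFinset, we e := by
        rw [subgraphCost, ← finsum_mem_coe_finset, Set.Finite.coe_toFinset]
      rw [hcost]
      have hinj : Function.Injective (Sym2.map (Subtype.val : St.verts → V)) :=
        Sym2.map.injective Subtype.val_injective
      have hnd2 : ((q.1.map St.hom).edges).Nodup := by
        rw [SimpleGraph.Walk.edges_map]
        exact hnd.map hinj
      have hsum : walkWeight we (q.1.map St.hom)
          = ∑ e ∈ (q.1.map St.hom).edges.toFinset, we e := by
        rw [walkWeight, List.sum_toFinset _ hnd2]
      rw [hsum]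
      refine Finset.sum_le_sum_of_subset ?_
      intro e he
      rw [List.mem_toFinset] at he
      rw [Set.Finite.mem_toFinset]
      rw [SimpleGraph.Walk.edges_map, List.mem_map] at he
      obtain ⟨e', he', rfl⟩ := he
      have he'' : e' ∈ St.coe.edgeSet := q.1.edges_subset_edgeSet he'
      induction e' using Sym2.ind with
      | _ x y =>
        simp only [SimpleGraph.mem_edgeSet, SimpleGraph.Subgraph.coe_adj] at he''
        simpa [SimpleGraph.Subgraph.mem_edgeSet] using he''
    have hmap : (q.1.map St.hom : G.Walk a b) = q.1.map St.hom := rfl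
    calc setDist G we T.verts b ≤ wdist G we a b := setDist_le_wdist we b haV
      _ ≤ walkWeight we (q.1.map St.hom) := wdist_le_walkWeight we _
      _ ≤ subgraphCost we St := key
end

section
/- For the nearest-neighbor-style greedy connection of κ points in a metric space, the i-th insertion cost c_i (distance from the connected set to the nearest unconnected point) satisfies c_i ≤ L/2 for every step, where L is the length of a shortest closed tour through all κ points. -/
open Fin.NatCast Fin.CommRing in
lemma rot_iter (n : ℕ) (i : Fin (n+1)) (k : ℕ) :
    (finRotate (n+1))^[k] i = i + (k : Fin (n+1)) := by
  induction k with
  | zero => simp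
  | succ k ih =>
    rw [Function.iterate_succ_apply', ih, finRotate_succ_apply]
    push_cast
    ring

open Fin.NatCast Fin.CommRing in
lemma rot_orbit {κ : ℕ} (hκ : 1 ≤ κ) (i j : Fin κ) :
    ∃ k, (finRotate κ)^[k] i = j := by
  cases κ with
  | zero => omega
  | succ n =>
    refine ⟨(j - i).val, ?_⟩
    rw [rot_iter, Fin.cast_val_eq_self]
    ring

/-- In a metric space, every greedy nearest-insertion step cost (the distance
from the connected set `A` of points to the nearest unconnected point) is at
most half the length `L` of a shortest closed tour through all `κ` points. -/
theorem greedy_step_le_half_tour {X : Type*} [MetricSpace X] (κ : ℕ)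
    (hκ : 2 ≤ κ) (p : Fin κ → X) (A : Finset (Fin κ)) (hA : A.Nonempty)
    (hAc : Aᶜ.Nonempty) :
    (Aᶜ.inf' hAc fun j => A.inf' hA fun a => dist (p a) (p j)) ≤
      (Finset.univ.inf' Finset.univ_nonempty
        fun σ : Equiv.Perm (Fin κ) =>
          ∑ i, dist (p (σ i)) (p (σ (finRotate κ i)))) / 2 := by
  set c := Aᶜ.inf' hAc fun j => A.inf' hA fun a => dist (p a) (p j) with hc
  have hcle : ∀ a ∈ A, ∀ j ∈ Aᶜ, c ≤ dist (p a) (p j) := by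
    intro a ha j hj
    exact le_trans (Finset.inf'_le _ hj) (Finset.inf'_le _ ha)
  rw [le_div_iff₀ (by norm_num : (0:ℝ) < 2)]
  apply Finset.le_inf'
  intro σ _
  set f := finRotate κ with hf
  -- find an out-edge
  obtain ⟨a, haA⟩ := hA
  obtain ⟨b, hbA⟩ := hAc
  rw [Finset.mem_compl] at hbA
  have hout : ∃ i, σ i ∈ A ∧ σ (f i) ∉ A := by
    by_contra h
    push_neg at h
    have key : ∀ k, σ (f^[k] (σ.symm a)) ∈ A := by
      intro k
      induction k with
      | zero => simpa using haA
      | succ k ih => rw [Function.iterate_succ_apply']; exact h _ ih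
    obtain ⟨k, hk⟩ := rot_orbit (by omega) (σ.symm a) (σ.symm b)
    have := key k
    rw [hk] at this
    simp at this
    exact hbA this
  have hin : ∃ i, σ i ∉ A ∧ σ (f i) ∈ A := by
    by_contra h
    push_neg at h
    have key : ∀ k, σ (f^[k] (σ.symm b)) ∉ A := by
      intro k
      induction k with
      | zero => simpa using hbA
      | succ k ih =>
        rw [Function.iterate_succ_apply']
        exact h _ ih
    obtain ⟨k, hk⟩ := rot_orbit (by omega) (σ.symm b) (σ.symm a)
    have := key k
    rw [hk] at this
    simp at this
    exact this haA
  obtain ⟨i, hiA, hiA'⟩ := hout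
  obtain ⟨i', hi'A, hi'A'⟩ := hin
  have hne : i ≠ i' := fun h => hi'A (h ▸ hiA)
  have h1 : c ≤ dist (p (σ i)) (p (σ (f i))) :=
    hcle _ hiA _ (Finset.mem_compl.mpr hiA')
  have h2 : c ≤ dist (p (σ i')) (p (σ (f i'))) := by
    rw [dist_comm]
    exact hcle _ hi'A' _ (Finset.mem_compl.mpr hi'A)
  calc c * 2 = c + c := by ring
    _ ≤ dist (p (σ i)) (p (σ (f i))) + dist (p (σ i')) (p (σ (f i'))) :=
        add_le_add h1 h2
    _ ≤ ∑ x, dist (p (σ x)) (p (σ (f x))) := by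
        apply Finset.add_le_sum (fun x _ => dist_nonneg) (Finset.mem_univ i)
          (Finset.mem_univ i') hne
end
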